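/- arXiv:0805.0589 — 2 statements merged into one kernel-verified Lean document; each statement's English description precedes it below -/
import Mathlib

section
/- The Alamouti code is fully diverse: for complex pairs (s1,s2) ≠ (t1,t2), the difference S(s1,s2) − S(t1,t2) of Alamouti matrices is invertible (has rank 2). -/
open Matrix

/-- Full diversity of the Alamouti code: differences of distinct codewords are invertible. -/
theorem stmt_3 (s1 s2 t1 t2 : ℂ) (h : (s1, s2) ≠ (t1, t2)) :
    IsUnit (!![s1, s2; -(starRingEnd ℂ) s2, (starRingEnd ℂ) s1] -
      !![t1, t2; -(starRingEnd ℂ) t2, (starRingEnd ℂ) t1]) ∧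
    (!![s1, s2; -(starRingEnd ℂ) s2, (starRingEnd ℂ) s1] -
      !![t1, t2; -(starRingEnd ℂ) t2, (starRingEnd ℂ) t1]).rank = 2 := by
  have hne : s1 - t1 ≠ 0 ∨ s2 - t2 ≠ 0 := by
    by_contra hc
    push_neg at hc
    exact h (by simp [Prod.ext_iff, sub_eq_zero.mp hc.1, sub_eq_zero.mp hc.2])
  have hM : !![s1, s2; -(starRingEnd ℂ) s2, (starRingEnd ℂ) s1] -
      !![t1, t2; -(starRingEnd ℂ) t2, (starRingEnd ℂ) t1] =
      !![s1 - t1, s2 - t2; -(starRingEnd ℂ) (s2 - t2), (starRingEnd ℂ) (s1 - t1)] := by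
    ext i j
    fin_cases i <;> fin_cases j <;> simp [map_sub] <;> ring
  have hdet : ((!![s1, s2; -(starRingEnd ℂ) s2, (starRingEnd ℂ) s1] -
      !![t1, t2; -(starRingEnd ℂ) t2, (starRingEnd ℂ) t1])).det ≠ 0 := by
    rw [hM, det_fin_two_of]
    have : (s1 - t1) * (starRingEnd ℂ) (s1 - t1) - (s2 - t2) * -(starRingEnd ℂ) (s2 - t2) =
        ((Complex.normSq (s1 - t1) + Complex.normSq (s2 - t2) : ℝ) : ℂ) := by
      simp only [mul_neg, sub_neg_eq_add, Complex.mul_conj]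
      push_cast
      ring
    rw [this]
    norm_cast
    rcases hne with h1 | h1
    · exact ne_of_gt (add_pos_of_pos_of_nonneg (Complex.normSq_pos.mpr h1)
        (Complex.normSq_nonneg _))
    · exact ne_of_gt (add_pos_of_nonneg_of_pos (Complex.normSq_nonneg _)
        (Complex.normSq_pos.mpr h1))
  have hu : IsUnit (!![s1, s2; -(starRingEnd ℂ) s2, (starRingEnd ℂ) s1] -
      !![t1, t2; -(starRingEnd ℂ) t2, (starRingEnd ℂ) t1]) := by
    rw [Matrix.isUnit_iff_isUnit_det]
    exact hdet.isUnit
  refine ⟨hu, ?_⟩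
  have := Matrix.rank_unit (hu.unit)
  simpa using this
end

section
/- Let h_{mk}, m=1..M0, k=1..M1 and g_{kj}, k=1..M1, j=1..M2 be the entries of independent channel matrices, and define the effective scalar channel c = Σ_{j=1}^{M2} Σ_{k=1}^{M1} |g_{kj}|² (Σ_{m=1}^{M0} |h_{mk}|²). Then c ≥ Σ_{k=1}^{M1} Σ_{j=1}^{min(M0,M2)} |g_{kj}|² |h_{jk}|², and the right-hand side is a sum of M1·min(M0,M2) terms each of which is a product of two independent |CN(0,1)|² variables; hence P(c ≤ ε) ≤ P(each of the M1·min(M0,M2) independent products ≤ ε). -/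
/-- The effective 2-hop channel gain `c = Σⱼ Σₖ |g_{kj}|² (Σₘ |h_{mk}|²)` dominates the sum
of `M1·min(M0,M2)` independent products `|g_{kj}|²|h_{jk}|²`; hence the event `{c ≤ ε}`
implies each individual product is at most `ε`. -/
theorem stmt_18 (M0 M1 M2 : ℕ) (h : Fin M0 → Fin M1 → ℂ) (g : Fin M1 → Fin M2 → ℂ) :
    let c : ℝ := ∑ j : Fin M2, ∑ k : Fin M1,
      ‖g k j‖ ^ 2 * (∑ m : Fin M0, ‖h m k‖ ^ 2)
    (∑ k : Fin M1, ∑ j : Fin (min M0 M2),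
        ‖g k (Fin.castLE (min_le_right M0 M2) j)‖ ^ 2 *
          ‖h (Fin.castLE (min_le_left M0 M2) j) k‖ ^ 2) ≤ c ∧
    ∀ ε : ℝ, c ≤ ε → ∀ (k : Fin M1) (j : Fin (min M0 M2)),
      ‖g k (Fin.castLE (min_le_right M0 M2) j)‖ ^ 2 *
        ‖h (Fin.castLE (min_le_left M0 M2) j) k‖ ^ 2 ≤ ε := by
  intro c
  have key : (∑ k : Fin M1, ∑ j : Fin (min M0 M2),
        ‖g k (Fin.castLE (min_le_right M0 M2) j)‖ ^ 2 *
          ‖h (Fin.castLE (min_le_left M0 M2) j) k‖ ^ 2) ≤ c := by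
    show _ ≤ ∑ j : Fin M2, ∑ k : Fin M1, ‖g k j‖ ^ 2 * (∑ m : Fin M0, ‖h m k‖ ^ 2)
    rw [show (∑ j : Fin M2, ∑ k : Fin M1, ‖g k j‖ ^ 2 * (∑ m : Fin M0, ‖h m k‖ ^ 2))
        = ∑ k : Fin M1, ∑ j : Fin M2, ‖g k j‖ ^ 2 * (∑ m : Fin M0, ‖h m k‖ ^ 2)
        from Finset.sum_comm]
    apply Finset.sum_le_sum
    intro k _
    calc ∑ j : Fin (min M0 M2),
          ‖g k (Fin.castLE (min_le_right M0 M2) j)‖ ^ 2 *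
            ‖h (Fin.castLE (min_le_left M0 M2) j) k‖ ^ 2
        ≤ ∑ j : Fin (min M0 M2),
          ‖g k (Fin.castLE (min_le_right M0 M2) j)‖ ^ 2 *
            (∑ m : Fin M0, ‖h m k‖ ^ 2) := by
          apply Finset.sum_le_sum
          intro j _
          apply mul_le_mul_of_nonneg_left _ (by positivity)
          exact Finset.single_le_sum (f := fun m : Fin M0 => ‖h m k‖ ^ 2)
            (fun m _ => by positivity) (Finset.mem_univ _)
      _ = ∑ j ∈ Finset.univ.map (Fin.castLEEmb (min_le_right M0 M2)),
            ‖g k j‖ ^ 2 * (∑ m : Fin M0, ‖h m k‖ ^ 2) := by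
          rw [Finset.sum_map]; rfl
      _ ≤ ∑ j : Fin M2, ‖g k j‖ ^ 2 * (∑ m : Fin M0, ‖h m k‖ ^ 2) := by
          apply Finset.sum_le_sum_of_subset_of_nonneg (Finset.subset_univ _)
          intro j _ _; positivity
  refine ⟨key, fun ε hε k j => ?_⟩
  refine le_trans (le_trans ?_ key) hε
  calc ‖g k (Fin.castLE (min_le_right M0 M2) j)‖ ^ 2 *
        ‖h (Fin.castLE (min_le_left M0 M2) j) k‖ ^ 2
      ≤ ∑ j' : Fin (min M0 M2),
          ‖g k (Fin.castLE (min_le_right M0 M2) j')‖ ^ 2 *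
            ‖h (Fin.castLE (min_le_left M0 M2) j') k‖ ^ 2 :=
        Finset.single_le_sum (f := fun j' : Fin (min M0 M2) =>
            ‖g k (Fin.castLE (min_le_right M0 M2) j')‖ ^ 2 *
              ‖h (Fin.castLE (min_le_left M0 M2) j') k‖ ^ 2)
          (fun i _ => by positivity) (Finset.mem_univ j)
    _ ≤ _ := Finset.single_le_sum
        (f := fun k' : Fin M1 => ∑ j' : Fin (min M0 M2),
          ‖g k' (Fin.castLE (min_le_right M0 M2) j')‖ ^ 2 *
            ‖h (Fin.castLE (min_le_left M0 M2) j') k'‖ ^ 2)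
        (fun k' _ => Finset.sum_nonneg fun i _ => by positivity) (Finset.mem_univ k)
end
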